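/- Let F_q be a finite field and n ≥ 1, k ≥ 2, and let 3 ≤ h < n with h > (1 - 1/k)n - 1. Then for every monic A of degree n, ∑_{f ∈ I(A;h)} d_k(f) = q^{h+1}·C(n+k-1, k-1) exactly; i.e., the remainder Δ_k(A;h) = ∑_{f ∈ I(A;h)} d_k(f) - q^{h+1}·C(n+k-1,k-1) vanishes identically when h > (1-1/k)n - 1. -/

import Mathlib

open Polynomial

/-- The number of ways to write `f` as an ordered product of `k` monic polynomials. -/
noncomputable def polyDivisorFun (Fq : Type*) [Field Fq] (k : ℕ) (f : Polynomial Fq) : ℕ :=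
  Nat.card {a : Fin k → Polynomial Fq // (∀ i, (a i).Monic) ∧ ∏ i, a i = f}

/-!
Sort the factorizations `a₁ ⋯ a_k` of the polynomials in `I(A;h)` by their degree vector `d`,
a composition of `n` into `k` parts; there are `C(n+k-1, k-1)` of these. The condition
`(k-1)n < k(h+1)` forces some part `d i₀ > n - (h+1)`. Once the other factors are fixed, their
product `B` is monic of degree `e = n - d i₀ ≤ h`, and `deg (B c - A) ≤ h` holds exactly when
`deg (c - A /ₘ B) < h + 1 - e`; such a `c` is automatically monic of degree `d i₀`. So each of the
`q^e` choices of the other factors contributes `q^(h+1-e)` tuples, and every degree vector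
contributes exactly `q^(h+1)`.
-/

namespace Set

variable {α β : Type*}

theorem ncard_inter_preimage_eq_finsum (g : α → β) (s : Set α) {S : Set β} (hS : S.Finite)
    (hfib : ∀ b ∈ S, (s ∩ g ⁻¹' {b}).Finite) :
    (s ∩ g ⁻¹' S).ncard = ∑ᶠ b ∈ S, (s ∩ g ⁻¹' {b}).ncard := by
  have hunion : s ∩ g ⁻¹' S = ⋃ b ∈ S, s ∩ g ⁻¹' {b} := by ext; simp
  rw [hunion, hS.ncard_biUnion hfib]
  intro b _ b' _ hbb'
  exact disjoint_left.2 fun a ha ha' => hbb' (ha.2.symm.trans ha'.2)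

theorem ncard_eq_ncard_mul_of_ncard_fiber_eq (g : α → β) {s : Set α} {S : Set β} (hS : S.Finite)
    (hgs : MapsTo g s S) {c : ℕ} (hc : c ≠ 0) (hfib : ∀ b ∈ S, (s ∩ g ⁻¹' {b}).ncard = c) :
    s.ncard = S.ncard * c := by
  have hfin : ∀ b ∈ S, (s ∩ g ⁻¹' {b}).Finite := fun b hb =>
    finite_of_ncard_ne_zero ((hfib b hb).symm ▸ hc)
  rw [← inter_eq_left.2 hgs.subset_preimage, ncard_inter_preimage_eq_finsum g s hS hfin,
    finsum_mem_congr rfl hfib, finsum_mem_eq_finite_toFinset_sum _ hS, Finset.sum_const,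
    smul_eq_mul, ncard_eq_toFinset_card S hS]

end Set

theorem Fintype.exists_lt_add_of_sum_eq {ι : Type*} [Fintype ι] {d : ι → ℕ} {n t : ℕ}
    (hd : ∑ i, d i = n) (hcond : (Fintype.card ι - 1) * n < Fintype.card ι * t) :
    ∃ i, n < d i + t := by
  obtain ⟨m, hm⟩ := Nat.exists_eq_add_one_of_ne_zero
    (by rintro h; simp [h] at hcond : Fintype.card ι ≠ 0)
  have hlt : ∑ _i : ι, n < ∑ i, (d i + t) := by
    simp only [Finset.sum_add_distrib, hd, Finset.sum_const, Finset.card_univ, hm, smul_eq_mul]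
    rw [hm, Nat.add_sub_cancel] at hcond
    linarith
  simpa using Finset.exists_lt_of_sum_lt hlt

theorem ncard_setOf_sum_eq (ι : Type*) [Fintype ι] [DecidableEq ι] (n : ℕ) :
    {d : ι → ℕ | ∑ i, d i = n}.ncard = (Fintype.card ι + n - 1).choose n := by
  rw [← Nat.card_coe_set_eq, ← Sym.card_sym_eq_choose, ← Nat.card_eq_fintype_card]
  exact (Nat.card_congr (Sym.equivNatSumOfFintype ι n)).symm

theorem finite_setOf_sum_eq (ι : Type*) [Fintype ι] [DecidableEq ι] (n : ℕ) :
    {d : ι → ℕ | ∑ i, d i = n}.Finite :=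
  Set.finite_coe_iff.1 (Finite.of_equiv _ (Sym.equivNatSumOfFintype ι n))

namespace Nat.WithBot

theorem add_coe_lt_coe_iff {x : WithBot ℕ} {e t : ℕ} (het : e ≤ t) :
    x + e < t ↔ x < (t - e : ℕ) := by
  induction x using WithBot.recBotCoe with
  | bot => simp
  | coe x =>
    rw [← Nat.cast_withBot, ← Nat.cast_add, Nat.cast_lt, Nat.cast_lt]
    omega

theorem lt_coe_add_one_iff {x : WithBot ℕ} {h : ℕ} : x < (h + 1 : ℕ) ↔ x ≤ h := by
  induction x using WithBot.recBotCoe with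
  | bot => simp
  | coe x =>
    rw [← Nat.cast_withBot, Nat.cast_lt, Nat.cast_le]
    omega

end Nat.WithBot

namespace Polynomial

variable {R : Type*} [CommRing R]

theorem IsMonicOfDegree.of_degree_sub_lt {A f : R[X]} {n : ℕ} (hA : IsMonicOfDegree A n)
    (h : (f - A).degree < n) : IsMonicOfDegree f n := by
  obtain hfA | hfA := eq_or_ne (f - A) 0
  · rwa [sub_eq_zero.1 hfA]
  · simpa using hA.add_right ((natDegree_lt_iff_degree_lt hfA).2 h)

theorem setOf_monic_natDegree_degree_sub_le_eq {A : R[X]} {n h : ℕ} (hA : IsMonicOfDegree A n)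
    (hhn : h < n) :
    {f : R[X] | f.Monic ∧ f.natDegree = n ∧ (f - A).degree ≤ (h : WithBot ℕ)} =
      {f | (f - A).degree < (h + 1 : ℕ)} := by
  ext f
  simp only [Set.mem_ofPred_eq, Nat.WithBot.lt_coe_add_one_iff]
  refine ⟨fun hf => hf.2.2, fun hf => ?_⟩
  obtain ⟨hdeg, hmon⟩ := hA.of_degree_sub_lt (hf.trans_lt (by exact_mod_cast hhn))
  exact ⟨hmon, hdeg, hf⟩

theorem isMonicOfDegree_prod {ι : Type*} {s : Finset ι} {a : ι → R[X]} {d : ι → ℕ}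
    (h : ∀ i ∈ s, IsMonicOfDegree (a i) (d i)) :
    IsMonicOfDegree (∏ i ∈ s, a i) (∑ i ∈ s, d i) :=
  ⟨(natDegree_prod_of_monic s a fun i hi => (h i hi).monic).trans
      (Finset.sum_congr rfl fun i hi => (h i hi).natDegree_eq),
    monic_prod_of_monic s a fun i hi => (h i hi).monic⟩

noncomputable def degreeSubLTEquiv (A : R[X]) (t : ℕ) :
    {f : R[X] // (f - A).degree < t} ≃ (Fin t → R) :=
  ((Equiv.subRight A).subtypeEquiv fun _ => mem_degreeLT.symm).trans
    (degreeLTEquiv R t).toEquiv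

theorem finite_setOf_degree_sub_lt [Finite R] (A : R[X]) (t : ℕ) :
    {f : R[X] | (f - A).degree < t}.Finite :=
  Set.finite_coe_iff.1 (Finite.of_equiv _ (degreeSubLTEquiv A t).symm)

theorem ncard_setOf_degree_sub_lt [Fintype R] (A : R[X]) (t : ℕ) :
    {f : R[X] | (f - A).degree < t}.ncard = Fintype.card R ^ t := by
  rw [← Nat.card_coe_set_eq]
  exact (Nat.card_congr (degreeSubLTEquiv A t)).trans (by simp)

theorem setOf_isMonicOfDegree_eq [Nontrivial R] (m : ℕ) :
    {p : R[X] | IsMonicOfDegree p m} = {p | (p - X ^ m).degree < (m : WithBot ℕ)} := by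
  ext p
  refine ⟨fun hp => ?_, fun hp => (isMonicOfDegree_X_pow R m).of_degree_sub_lt hp⟩
  have hdeg : p.degree = m := by rw [degree_eq_natDegree hp.ne_zero, hp.natDegree_eq]
  rw [Set.mem_ofPred_eq, ← hdeg]
  exact degree_sub_lt_left (by rw [hdeg, degree_X_pow]) hp.ne_zero
    (by rw [hp.leadingCoeff_eq, leadingCoeff_X_pow])

theorem ncard_setOf_forall_isMonicOfDegree [Fintype R] [Nontrivial R] {J : Type*} [Fintype J]
    (d : J → ℕ) :
    {b : J → R[X] | ∀ j, IsMonicOfDegree (b j) (d j)}.ncard = Fintype.card R ^ ∑ j, d j := by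
  rw [← Nat.card_coe_set_eq, ← Finset.prod_pow_eq_pow_sum]
  refine (Nat.card_congr (Equiv.subtypePiEquivPi (p := fun j p => IsMonicOfDegree p (d j)))).trans
    (Nat.card_pi.trans ?_)
  refine Finset.prod_congr rfl fun j _ => ?_
  rw [← ncard_setOf_degree_sub_lt (X ^ d j), ← setOf_isMonicOfDegree_eq, ← Nat.card_coe_set_eq]
  rfl

theorem finite_setOf_monic_prod_eq [Finite R] {ι : Type*} [Fintype ι] (f : R[X]) :
    {a : ι → R[X] | (∀ i, (a i).Monic) ∧ ∏ i, a i = f}.Finite := by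
  refine (Set.Finite.pi (t := fun _ => {p | (p - 0).degree < ((f.natDegree + 1 : ℕ) : WithBot ℕ)})
    fun _ => finite_setOf_degree_sub_lt 0 _).subset ?_
  rintro a ⟨hmon, rfl⟩ i -
  have hle : (a i).natDegree ≤ (∏ i, a i).natDegree := by
    rw [natDegree_prod_of_monic _ _ fun i _ => hmon i]
    exact Finset.single_le_sum (f := fun i => (a i).natDegree) (fun _ _ => Nat.zero_le _)
      (Finset.mem_univ i)
  rw [Set.mem_ofPred_eq, sub_zero]
  exact degree_le_natDegree.trans_lt (by exact_mod_cast Nat.lt_succ_of_le hle)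

theorem degree_mul_sub_lt_iff [Nontrivial R] {A B c : R[X]} {t : ℕ} (hB : B.Monic)
    (ht : B.natDegree ≤ t) :
    (B * c - A).degree < t ↔ (c - A /ₘ B).degree < (t - B.natDegree : ℕ) := by
  have hmod : (A %ₘ B).degree < t := (degree_modByMonic_lt A hB).trans_le <| by
    rw [degree_eq_natDegree hB.ne_zero]; exact_mod_cast ht
  have hsplit : B * c - A = (c - A /ₘ B) * B - A %ₘ B := by
    linear_combination (modByMonic_add_div A B)
  rw [hsplit, ← Nat.WithBot.add_coe_lt_coe_iff ht, ← degree_eq_natDegree hB.ne_zero,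
    ← hB.degree_mul]
  constructor
  · intro h
    simpa using (degree_add_le _ _).trans_lt (max_lt h hmod)
  · intro h
    exact (degree_sub_le _ _).trans_lt (max_lt h hmod)

theorem isMonicOfDegree_and_degree_mul_sub_lt_iff [Nontrivial R] {A B c : R[X]} {e m t : ℕ}
    (hA : IsMonicOfDegree A (e + m)) (hB : IsMonicOfDegree B e) (het : e ≤ t) (htn : t ≤ e + m) :
    IsMonicOfDegree c m ∧ (B * c - A).degree < t ↔ (c - A /ₘ B).degree < (t - e : ℕ) := by
  have key := degree_mul_sub_lt_iff (A := A) (c := c) hB.monic (hB.natDegree_eq ▸ het)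
  rw [hB.natDegree_eq] at key
  refine ⟨fun h => key.1 h.2, fun h => ⟨?_, key.2 h⟩⟩
  exact hB.of_mul_left (hA.of_degree_sub_lt ((key.2 h).trans_le (by exact_mod_cast htn)))

section Tuples

variable {ι : Type*} [Fintype ι] [DecidableEq ι]

theorem forall_isMonicOfDegree_and_degree_prod_sub_lt_iff [Nontrivial R] {A : R[X]} {n t : ℕ}
    (hA : IsMonicOfDegree A n) (htn : t ≤ n) {d : ι → ℕ} (hd : ∑ i, d i = n) {i₀ : ι}
    (hi₀ : n ≤ d i₀ + t) (a : ι → R[X]) :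
    ((∀ i, IsMonicOfDegree (a i) (d i)) ∧ (∏ i, a i - A).degree < t) ↔
      (∀ j : {j // j ≠ i₀}, IsMonicOfDegree (a j) (d j)) ∧
        (a i₀ - A /ₘ ∏ j : {j // j ≠ i₀}, a j).degree < (t - ∑ j : {j // j ≠ i₀}, d j : ℕ) := by
  rw [Fintype.sum_eq_add_sum_subtype_ne d i₀, add_comm] at hd
  have hforall : (∀ i, IsMonicOfDegree (a i) (d i)) ↔
      (∀ j : {j // j ≠ i₀}, IsMonicOfDegree (a j) (d j)) ∧ IsMonicOfDegree (a i₀) (d i₀) :=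
    ⟨fun h => ⟨fun j => h j, h i₀⟩,
      fun h i => if hi : i = i₀ then hi ▸ h.2 else h.1 ⟨i, hi⟩⟩
  rw [hforall, Fintype.prod_eq_mul_prod_subtype_ne a i₀, mul_comm, and_assoc]
  exact and_congr_right fun hrest => isMonicOfDegree_and_degree_mul_sub_lt_iff (hd ▸ hA)
    (isMonicOfDegree_prod fun j _ => hrest j) (by omega) (by omega)

theorem ncard_setOf_forall_isMonicOfDegree_degree_prod_sub_lt [Fintype R] [Nontrivial R]
    {A : R[X]} {n t : ℕ} (hA : IsMonicOfDegree A n) (htn : t ≤ n) {d : ι → ℕ}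
    (hd : ∑ i, d i = n) {i₀ : ι} (hi₀ : n ≤ d i₀ + t) :
    {a : ι → R[X] | (∀ i, IsMonicOfDegree (a i) (d i)) ∧ (∏ i, a i - A).degree < t}.ncard =
      Fintype.card R ^ t := by
  have hsplit := forall_isMonicOfDegree_and_degree_prod_sub_lt_iff hA htn hd hi₀
  set e := ∑ j : {j // j ≠ i₀}, d j
  have het : e ≤ t := by rw [Fintype.sum_eq_add_sum_subtype_ne d i₀] at hd; omega
  set split := Equiv.funSplitAt i₀ R[X]
  set F : Set (ι → R[X]) := {a | (∀ i, IsMonicOfDegree (a i) (d i)) ∧ (∏ i, a i - A).degree < t}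
  set S : Set ({j // j ≠ i₀} → R[X]) := {b | ∀ j, IsMonicOfDegree (b j) (d j)}
  have hS : S.ncard = Fintype.card R ^ e := ncard_setOf_forall_isMonicOfDegree _
  rw [show Fintype.card R ^ t = S.ncard * Fintype.card R ^ (t - e) by
    rw [hS, ← pow_add, Nat.add_sub_cancel' het]]
  refine Set.ncard_eq_ncard_mul_of_ncard_fiber_eq (fun a => (split a).2) (s := F) (S := S)
    (Set.finite_of_ncard_ne_zero (by simp [hS])) (fun a ha => ((hsplit a).1 ha).1)
    (c := Fintype.card R ^ (t - e)) (by simp) fun b hb => ?_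
  have hfiber : F ∩ (fun a => (split a).2) ⁻¹' {b} =
      (fun c => split.symm (c, b)) '' {c | (c - A /ₘ ∏ j, b j).degree < (t - e : ℕ)} := by
    ext a
    simp only [F, Set.mem_inter_iff, Set.mem_ofPred_eq, Set.mem_preimage, Set.mem_singleton_iff,
      Set.mem_image, hsplit]
    constructor
    · rintro ⟨⟨-, hdeg⟩, rfl⟩
      exact ⟨a i₀, hdeg, split.symm_apply_apply a⟩
    · rintro ⟨c, hc, rfl⟩
      have hi₀ : split.symm (c, b) i₀ = c := by simp [split]
      have hrest : ∀ j : {j // j ≠ i₀}, split.symm (c, b) j = b j := fun j => by simp [split, j.2]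
      simp only [hi₀, hrest]
      exact ⟨⟨hb, hc⟩, by rw [Equiv.apply_symm_apply]⟩
  have hinj : Function.Injective fun c => split.symm (c, b) :=
    split.symm.injective.comp (Prod.mk_left_injective b)
  rw [hfiber, Set.ncard_image_of_injective _ hinj, ncard_setOf_degree_sub_lt]

theorem ncard_setOf_monic_degree_prod_sub_lt [Fintype R] [Nontrivial R] {A : R[X]} {n t : ℕ}
    (hA : IsMonicOfDegree A n) (htn : t ≤ n)
    (hcond : (Fintype.card ι - 1) * n < Fintype.card ι * t) :
    {a : ι → R[X] | (∀ i, (a i).Monic) ∧ (∏ i, a i - A).degree < t}.ncard =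
      {d : ι → ℕ | ∑ i, d i = n}.ncard * Fintype.card R ^ t := by
  refine Set.ncard_eq_ncard_mul_of_ncard_fiber_eq (fun a i => (a i).natDegree)
    (finite_setOf_sum_eq ι n) (fun a ha => ?_) (by simp) fun d hd => ?_
  · obtain ⟨hmon, hball⟩ := ha
    have hprod := hA.of_degree_sub_lt (hball.trans_le (by exact_mod_cast htn))
    rw [← hprod.natDegree_eq, natDegree_prod_of_monic _ _ fun i _ => hmon i]
    rfl
  obtain ⟨i₀, hi₀⟩ := Fintype.exists_lt_add_of_sum_eq hd hcond
  rw [← ncard_setOf_forall_isMonicOfDegree_degree_prod_sub_lt hA htn hd hi₀.le]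
  congr 1
  ext a
  simp only [Set.mem_inter_iff, Set.mem_ofPred_eq, Set.mem_preimage, Set.mem_singleton_iff,
    funext_iff, isMonicOfDegree_iff', forall_and]
  tauto

end Tuples

end Polynomial

theorem finsum_polyDivisorFun_eq_ncard {Fq : Type*} [Field Fq] [Finite Fq] (k : ℕ)
    {S : Set Fq[X]} (hS : S.Finite) :
    ∑ᶠ f ∈ S, polyDivisorFun Fq k f =
      {a : Fin k → Fq[X] | (∀ i, (a i).Monic) ∧ ∏ i, a i ∈ S}.ncard := by
  calc ∑ᶠ f ∈ S, polyDivisorFun Fq k f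
      = ∑ᶠ f ∈ S, ({a : Fin k → Fq[X] | ∀ i, (a i).Monic} ∩ (fun a => ∏ i, a i) ⁻¹' {f}).ncard := by
        simp only [polyDivisorFun, ← Nat.card_coe_set_eq]
        rfl
    _ = _ :=
      (Set.ncard_inter_preimage_eq_finsum _ _ hS fun f _ => finite_setOf_monic_prod_eq f).symm

theorem divisor_short_interval_exact_general (Fq : Type*) [Field Fq] [Fintype Fq]
    (n h k : ℕ) (hhn : h < n)
    (hcond : (k - 1) * n < k * (h + 1))
    (A : Polynomial Fq) (hA : A.Monic) (hAdeg : A.natDegree = n) :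
    ∑ᶠ f ∈ {f : Polynomial Fq | f.Monic ∧ f.natDegree = n ∧
        (f - A).degree ≤ (h : WithBot ℕ)}, polyDivisorFun Fq k f =
      Fintype.card Fq ^ (h + 1) * (n + k - 1).choose (k - 1) := by
  have hk : 1 ≤ k := Nat.pos_of_ne_zero (by rintro rfl; simp at hcond)
  have hA' : IsMonicOfDegree A n := ⟨hAdeg, hA⟩
  rw [setOf_monic_natDegree_degree_sub_le_eq hA' hhn,
    finsum_polyDivisorFun_eq_ncard k (finite_setOf_degree_sub_lt A _)]
  simp only [Set.mem_ofPred_eq]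
  rw [ncard_setOf_monic_degree_prod_sub_lt hA' hhn (by simpa using hcond), ncard_setOf_sum_eq,
    Fintype.card_fin, mul_comm, add_comm k n,
    Nat.choose_symm_of_eq_add (by omega : n + k - 1 = n + (k - 1))]

/-- For `3 ≤ h < n` with `h > (1 - 1/k)n - 1` (i.e. `(k-1)n < k(h+1)`), the sum of
the divisor function `d_k` over the short interval
`I(A;h) = {f monic of degree n : deg(f-A) ≤ h}` around any monic `A` of degree `n`
equals `q^{h+1}·C(n+k-1, k-1)` exactly: the remainder `Δ_k(A;h)` vanishes. -/
theorem divisor_short_interval_exact (Fq : Type*) [Field Fq] [Fintype Fq]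
    (n h k : ℕ) (hk : 2 ≤ k) (hn : 1 ≤ n) (hh : 3 ≤ h) (hhn : h < n)
    (hcond : (k - 1) * n < k * (h + 1))
    (A : Polynomial Fq) (hA : A.Monic) (hAdeg : A.natDegree = n) :
    ∑ᶠ f ∈ {f : Polynomial Fq | f.Monic ∧ f.natDegree = n ∧
        (f - A).degree ≤ (h : WithBot ℕ)}, polyDivisorFun Fq k f =
      Fintype.card Fq ^ (h + 1) * (n + k - 1).choose (k - 1) :=
  divisor_short_interval_exact_general Fq n h k hhn hcond A hA hAdeg
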